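/- Every nonempty packed word w admits a unique factorization w = w_1/w_2/⋯/w_k as an iterated left-shifted concatenation in which every factor w_i is an irreducible packed word. -/

import Mathlib

/-- The maximum letter of a word (a list of natural numbers), with `wmax [] = 0`. -/
def wmax (w : List ℕ) : ℕ := w.foldr max 0

/-- A word over the positive integers is packed if every letter from `1` to its maximum
occurs in it. -/
def IsPacked (w : List ℕ) : Prop :=
  (∀ x ∈ w, 0 < x) ∧ ∀ i : ℕ, 0 < i → i ≤ wmax w → i ∈ w

/-- Shift every letter of `w` by `m`. -/
def shiftW (m : ℕ) (w : List ℕ) : List ℕ := w.map (· + m)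

/-- Left-shifted concatenation `u / v`: the letters of `u` are shifted by `max v`. -/
def slash (u v : List ℕ) : List ℕ := shiftW (wmax v) u ++ v

/-- Iterated left-shifted concatenation `w₁ / w₂ / ⋯ / w_k`. -/
def slashAll (l : List (List ℕ)) : List ℕ := l.foldr slash []

/-- `c` is a global descent of `w` (positions are 1-based, `1 ≤ c ≤ |w| - 1`). -/
def GlobalDescent (w : List ℕ) (c : ℕ) : Prop :=
  1 ≤ c ∧ c + 1 ≤ w.length ∧ ∀ a ∈ w.take c, ∀ b ∈ w.drop c, b < a

/-- A packed word is irreducible if it is nonempty and has no global descent. -/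
def Irred (w : List ℕ) : Prop :=
  IsPacked w ∧ w ≠ [] ∧ ∀ c, ¬ GlobalDescent w c

/-!
Left-shifted concatenation is associative with unit `ε`, and every letter of the left factor
of `u / v` exceeds every letter of `v`. Hence cutting a packed word at any global descent writes
it as `u / v` with `u`, `v` packed and shorter, which gives a factorization by induction on the
length. For uniqueness, if `u` is irreducible then `u / v` has no global descent before `|u|`,
and one at `|u|` when `v ≠ ε`; so two factorizations `u₁ / v₁ = u₂ / v₂` with irreducible first
factors have `|u₁| = |u₂|`, and cutting there recovers both factors.
-/

lemma le_wmax {w : List ℕ} {x : ℕ} (hx : x ∈ w) : x ≤ wmax w :=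
  List.le_max_of_le hx le_rfl

lemma wmax_le {w : List ℕ} {n : ℕ} (h : ∀ x ∈ w, x ≤ n) : wmax w ≤ n :=
  List.max_le_of_forall_le w n h

lemma wmax_mem {w : List ℕ} (hw : w ≠ []) : wmax w ∈ w :=
  List.maximum_mem (List.foldr_max_of_ne_nil hw).symm

lemma wmax_append (u v : List ℕ) : wmax (u ++ v) = max (wmax u) (wmax v) := by
  refine le_antisymm (wmax_le fun x hx => ?_) (max_le ?_ ?_)
  · rcases List.mem_append.1 hx with hx | hx
    · exact le_max_of_le_left (le_wmax hx)
    · exact le_max_of_le_right (le_wmax hx)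
  · exact wmax_le fun x hx => le_wmax (List.mem_append_left v hx)
  · exact wmax_le fun x hx => le_wmax (List.mem_append_right u hx)

lemma wmax_shiftW (m : ℕ) {u : List ℕ} (hu : u ≠ []) : wmax (shiftW m u) = wmax u + m := by
  refine le_antisymm (wmax_le fun x hx => ?_) (le_wmax (List.mem_map_of_mem (wmax_mem hu)))
  obtain ⟨y, hy, rfl⟩ := List.mem_map.1 hx
  exact Nat.add_le_add_right (le_wmax hy) m

lemma wmax_slash (u v : List ℕ) : wmax (slash u v) = wmax u + wmax v := by
  rcases eq_or_ne u [] with rfl | hu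
  · simp [slash, shiftW, wmax]
  · rw [slash, wmax_append, wmax_shiftW _ hu]
    omega

lemma slash_nil (u : List ℕ) : slash u [] = u := by
  simp [slash, shiftW, wmax]

lemma slash_eq_nil {u v : List ℕ} : slash u v = [] ↔ u = [] ∧ v = [] := by
  simp [slash, shiftW]

lemma length_shiftW (m : ℕ) (u : List ℕ) : (shiftW m u).length = u.length :=
  List.length_map _

lemma length_slash (u v : List ℕ) : (slash u v).length = u.length + v.length := by
  rw [slash, List.length_append, length_shiftW]

lemma slash_assoc (u v x : List ℕ) : slash (slash u v) x = slash u (slash v x) := by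
  change shiftW (wmax x) (slash u v) ++ x = shiftW (wmax (slash v x)) u ++ slash v x
  rw [wmax_slash]
  simp only [slash, shiftW, List.map_append, List.map_map, List.append_assoc,
    Function.comp_def, add_assoc]

lemma slashAll_append (l₁ l₂ : List (List ℕ)) :
    slashAll (l₁ ++ l₂) = slash (slashAll l₁) (slashAll l₂) := by
  induction l₁ with
  | nil => rfl
  | cons u t ih =>
    change slash u (slashAll (t ++ l₂)) = slash (slash u (slashAll t)) (slashAll l₂)
    rw [ih, slash_assoc]

lemma take_length_slash (u v : List ℕ) : (slash u v).take u.length = shiftW (wmax v) u :=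
  List.take_left' (length_shiftW _ _)

lemma drop_length_slash (u v : List ℕ) : (slash u v).drop u.length = v :=
  List.drop_left' (length_shiftW _ _)

lemma isPacked_of_slash {u v : List ℕ} (hu : ∀ x ∈ u, 0 < x) (h : IsPacked (slash u v)) :
    IsPacked u ∧ IsPacked v := by
  have hmem {i : ℕ} (hi : 0 < i) (hle : i ≤ wmax u + wmax v) : i ∈ slash u v :=
    h.2 i hi (wmax_slash u v ▸ hle)
  refine ⟨⟨hu, fun i hi hle => ?_⟩,
    ⟨fun x hx => h.1 x (List.mem_append_right _ hx), fun i hi hle => ?_⟩⟩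
  · rcases List.mem_append.1 (hmem (i := i + wmax v) (by omega) (by omega)) with hs | hv
    · obtain ⟨x, hx, hxi⟩ := List.mem_map.1 hs
      rwa [show i = x by omega]
    · have := le_wmax hv
      omega
  · rcases List.mem_append.1 (hmem hi (by omega)) with hs | hv
    · obtain ⟨x, hx, rfl⟩ := List.mem_map.1 hs
      have := hu x hx
      omega
    · exact hv

lemma globalDescent_slash {u v : List ℕ} (hu : ∀ x ∈ u, 0 < x) (hu₀ : u ≠ []) (hv₀ : v ≠ []) :
    GlobalDescent (slash u v) u.length := by
  refine ⟨List.length_pos_iff.2 hu₀, ?_, ?_⟩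
  · rw [length_slash]
    exact Nat.add_le_add_left (List.length_pos_iff.2 hv₀) _
  · rw [take_length_slash, drop_length_slash]
    intro a ha b hb
    obtain ⟨x, hx, rfl⟩ := List.mem_map.1 ha
    have := hu x hx
    have := le_wmax hb
    omega

lemma GlobalDescent.of_slash {u v : List ℕ} {d : ℕ} (hd : d < u.length)
    (h : GlobalDescent (slash u v) d) : GlobalDescent u d := by
  obtain ⟨hd₁, -, hdesc⟩ := h
  have htake : (slash u v).take d = shiftW (wmax v) (u.take d) := by
    rw [slash, List.take_append_of_le_length (by rw [length_shiftW]; omega), shiftW, shiftW,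
      List.map_take]
  have hdrop : (slash u v).drop d = shiftW (wmax v) (u.drop d) ++ v := by
    rw [slash, List.drop_append_of_le_length (by rw [length_shiftW]; omega), shiftW, shiftW,
      List.map_drop]
  refine ⟨hd₁, hd, fun a ha b hb => ?_⟩
  have := hdesc (a + wmax v) (htake ▸ List.mem_map_of_mem ha) (b + wmax v)
    (hdrop ▸ List.mem_append_left v (List.mem_map_of_mem hb))
  omega

lemma GlobalDescent.exists_slash_eq {w : List ℕ} {c : ℕ} (h : GlobalDescent w c) :
    ∃ u v, slash u v = w ∧ (∀ x ∈ u, 0 < x) ∧ u ≠ [] ∧ v ≠ [] := by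
  obtain ⟨hc, hcw, hdesc⟩ := h
  have hv₀ : w.drop c ≠ [] := by rw [Ne, List.drop_eq_nil_iff]; omega
  have hgt : ∀ a ∈ w.take c, wmax (w.drop c) < a := fun a ha => hdesc a ha _ (wmax_mem hv₀)
  refine ⟨(w.take c).map (· - wmax (w.drop c)), w.drop c, ?_, ?_,
    List.ne_nil_of_length_pos (by rw [List.length_map, List.length_take]; omega), hv₀⟩
  · conv_rhs => rw [← List.take_append_drop c w]
    rw [slash, shiftW, List.map_map]
    congr 1
    refine (List.map_congr_left fun a ha => ?_).trans (List.map_id _)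
    have := hgt a ha
    simp only [Function.comp_apply, id]
    omega
  · intro x hx
    obtain ⟨a, ha, rfl⟩ := List.mem_map.1 hx
    have := hgt a ha
    omega

lemma length_le_of_slash_eq {u₁ u₂ v₁ v₂ : List ℕ} (hu₁ : ∀ x ∈ u₁, 0 < x) (hu₁₀ : u₁ ≠ [])
    (hu₂ : Irred u₂) (h : slash u₁ v₁ = slash u₂ v₂) : u₂.length ≤ u₁.length := by
  by_contra! hlt
  have hv₁ : v₁ ≠ [] := by
    rintro rfl
    have := congrArg List.length h
    rw [length_slash, length_slash, List.length_nil] at this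
    omega
  exact hu₂.2.2 _ (GlobalDescent.of_slash hlt (h ▸ globalDescent_slash hu₁ hu₁₀ hv₁))

lemma slash_inj_of_irred {u₁ u₂ v₁ v₂ : List ℕ} (hu₁ : Irred u₁) (hu₂ : Irred u₂)
    (h : slash u₁ v₁ = slash u₂ v₂) : u₁ = u₂ ∧ v₁ = v₂ := by
  have hlen : u₁.length = u₂.length :=
    le_antisymm (length_le_of_slash_eq hu₂.1.1 hu₂.2.1 hu₁ h.symm)
      (length_le_of_slash_eq hu₁.1.1 hu₁.2.1 hu₂ h)
  have hv : v₁ = v₂ := by rw [← drop_length_slash u₁ v₁, h, hlen, drop_length_slash]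
  have hu := take_length_slash u₁ v₁
  rw [h, hlen, take_length_slash, hv] at hu
  exact ⟨List.map_injective_iff.2 (add_left_injective _) hu.symm, hv⟩

lemma slashAll_injective {l l' : List (List ℕ)} (hl : ∀ u ∈ l, Irred u) (hl' : ∀ u ∈ l', Irred u)
    (h : slashAll l = slashAll l') : l = l' := by
  induction l generalizing l' with
  | nil =>
    cases l' with
    | nil => rfl
    | cons u' t' => exact absurd (slash_eq_nil.1 h.symm).1 (hl' u' List.mem_cons_self).2.1
  | cons u t ih =>
    rw [List.forall_mem_cons] at hl
    cases l' with
    | nil => exact absurd (slash_eq_nil.1 h).1 hl.1.2.1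
    | cons u' t' =>
      rw [List.forall_mem_cons] at hl'
      obtain ⟨rfl, ht⟩ := slash_inj_of_irred hl.1 hl'.1 h
      rw [ih hl.2 hl'.2 ht]

theorem IsPacked.exists_slashAll_eq {w : List ℕ} (hw : IsPacked w) :
    ∃ l, (∀ u ∈ l, Irred u) ∧ slashAll l = w := by
  by_cases hw₀ : w = []
  · exact ⟨[], by simp, hw₀ ▸ rfl⟩
  by_cases hd : ∃ c, GlobalDescent w c
  swap
  · push Not at hd
    exact ⟨[w], by simpa using ⟨hw, hw₀, hd⟩, slash_nil w⟩
  obtain ⟨c, hc⟩ := hd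
  obtain ⟨u, v, rfl, hu, hu₀, hv₀⟩ := hc.exists_slash_eq
  obtain ⟨hup, hvp⟩ := isPacked_of_slash hu hw
  have hlen : (slash u v).length = u.length + v.length := length_slash u v
  have hu_pos : 0 < u.length := List.length_pos_iff.2 hu₀
  have hv_pos : 0 < v.length := List.length_pos_iff.2 hv₀
  obtain ⟨lu, hlu, rfl⟩ := hup.exists_slashAll_eq
  obtain ⟨lv, hlv, rfl⟩ := hvp.exists_slashAll_eq
  exact ⟨lu ++ lv, List.forall_mem_append.2 ⟨hlu, hlv⟩, slashAll_append lu lv⟩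
termination_by w.length

theorem unique_factorization_into_irreducibles
    (w : List ℕ) (hw : IsPacked w) (hne : w ≠ []) :
    ∃! l : List (List ℕ), l ≠ [] ∧ (∀ u ∈ l, Irred u) ∧ w = slashAll l := by
  obtain ⟨l, hl, rfl⟩ := hw.exists_slashAll_eq
  refine ⟨l, ⟨?_, hl, rfl⟩, fun l' ⟨_, hl', h⟩ => slashAll_injective hl' hl h.symm⟩
  rintro rfl
  exact hne rfl
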